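/- arXiv:2108.01180 — 3 statements merged into one kernel-verified Lean document; each statement's English description precedes it below -/
import Mathlib

section
/- Under the standing hypotheses with 1_g ≠ 0 for all g ∈ 𝒢, let ℋ ∈ wSub_gt(𝒢) with the chosen decomposition and transversals, let T = S^{α_ℋ} and T_{y_j} = S_{y_j}^{α_{ℋ_j(y_j)}} for 1 ≤ j ≤ r. Then 𝒢_T is a wide subgroupoid of 𝒢 if and only if 𝒢(y_j)_{T_{y_j}} is a subgroup of 𝒢(y_j) for all 1 ≤ j ≤ r. -/
open CategoryTheory

namespace PaperGalois

/-- A unital partial action of a groupoid (with object/morphism data given by a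
`CategoryTheory.Groupoid` structure on `Obj`) on a commutative ring `S`.
For a morphism `g : a ⟶ b` (source `a`, target `b`), `e g` is the central idempotent
with `S_g = S • e g`, and `act g s` encodes `α_g(s · 1_{g⁻¹})`. -/
structure UPA (Obj : Type*) [Groupoid Obj] (S : Type*) [CommRing S] where
  e : ∀ ⦃a b : Obj⦄, (a ⟶ b) → S
  act : ∀ ⦃a b : Obj⦄, (a ⟶ b) → S → S
  idem : ∀ ⦃a b : Obj⦄ (g : a ⟶ b), e g * e g = e g
  e_le : ∀ ⦃a b : Obj⦄ (g : a ⟶ b), e g * e (𝟙 b) = e g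
  act_proj : ∀ ⦃a b : Obj⦄ (g : a ⟶ b) (s : S), act g (s * e (Groupoid.inv g)) = act g s
  act_mem : ∀ ⦃a b : Obj⦄ (g : a ⟶ b) (s : S), act g s * e g = act g s
  act_add : ∀ ⦃a b : Obj⦄ (g : a ⟶ b) (s t : S), act g (s + t) = act g s + act g t
  act_mul : ∀ ⦃a b : Obj⦄ (g : a ⟶ b) (s t : S), act g (s * t) = act g s * act g t
  act_unit : ∀ ⦃a b : Obj⦄ (g : a ⟶ b), act g (e (Groupoid.inv g)) = e g
  act_id : ∀ (a : Obj) (s : S), act (𝟙 a) s = s * e (𝟙 a)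
  act_inv : ∀ ⦃a b : Obj⦄ (g : a ⟶ b) (s : S),
      act (Groupoid.inv g) (act g s) = s * e (Groupoid.inv g)
  act_comp : ∀ ⦃a b c : Obj⦄ (h : a ⟶ b) (g : b ⟶ c) (s : S),
      act g (act h s) = act (h ≫ g) s * e g

namespace UPA

variable {Obj : Type*} [Groupoid Obj] {S : Type*} [CommRing S] (α : UPA Obj S)

lemma act_zero ⦃a b : Obj⦄ (g : a ⟶ b) : α.act g 0 = 0 := by
  have h := α.act_add g 0 0
  rw [add_zero] at h
  exact (left_eq_add.mp h)

lemma act_neg ⦃a b : Obj⦄ (g : a ⟶ b) (s : S) : α.act g (-s) = -(α.act g s) := by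
  have h := α.act_add g s (-s)
  rw [add_neg_cancel, α.act_zero] at h
  exact (eq_neg_of_add_eq_zero_right h.symm)

lemma act_one ⦃a b : Obj⦄ (g : a ⟶ b) : α.act g 1 = α.e g := by
  have h := α.act_proj g 1
  rw [one_mul, α.act_unit] at h
  exact h.symm

lemma act_e_src ⦃a b : Obj⦄ (g : a ⟶ b) : α.act g (α.e (𝟙 a)) = α.e g := by
  have h1 : α.e (𝟙 a) * α.e (Groupoid.inv g) = α.e (Groupoid.inv g) := by
    rw [mul_comm]; exact α.e_le (Groupoid.inv g)
  have h2 := α.act_proj g (α.e (𝟙 a))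
  rw [h1, α.act_unit] at h2
  exact h2.symm

/-- The set of `α`-invariant elements of `S` relative to a subgroupoid `H`:
`S^{α_H} = {s ∈ S : α_h(s·1_{h⁻¹}) = s·1_h for all h ∈ H}`. -/
def invSet (H : Subgroupoid Obj) : Set S :=
  {s : S | ∀ ⦃a b : Obj⦄ (h : a ⟶ b), h ∈ H.arrows a b → α.act h s = s * α.e h}

/-- The invariants `S_y^{α_A}` of the corner ring `S_y = S·1_y` under a set `A`
of loops at `y`. -/
def grpInvSet (y : Obj) (A : Set (y ⟶ y)) : Set S :=
  {s : S | s * α.e (𝟙 y) = s ∧ ∀ g ∈ A, α.act g s = s * α.e g}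

/-- The arrows `a ⟶ b` of the groupoid acting trivially on the subset `T ⊆ S`;
for `T` a subring this gives `𝒢_T`. -/
def fixingSet (T : Set S) (a b : Obj) : Set (a ⟶ b) :=
  {g : a ⟶ b | ∀ t ∈ T, α.act g t = t * α.e g}

/-- `⊕_{y ∈ Z} S_y`, the part of `S` supported on a set `Z` of objects. -/
def partSet (Z : Set Obj) : Set S :=
  {s : S | ∀ y : Obj, y ∉ Z → s * α.e (𝟙 y) = 0}

/-- `T·1_y ⊆ S_y` for a subset `T ⊆ S`. -/
def cornerSet (T : Set S) (y : Obj) : Set S :=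
  (fun t => t * α.e (𝟙 y)) '' T

/-- `T' ⊆ S_y` is `α_{𝒢(y,z)}`-strong. -/
def strongAt (T' : Set S) (a b : Obj) : Prop :=
  ∀ g h : a ⟶ b, (h ≫ Groupoid.inv g) ∉ α.fixingSet T' a a →
    ∀ f : S, f * f = f → f ≠ 0 → (f * α.e g = f ∨ f * α.e h = f) →
      ∃ t ∈ T', α.act g t * f ≠ α.act h t * f

/-- `T ⊆ S` is `α`-strong. -/
def IsStrong (T : Set S) : Prop :=
  ∀ a b : Obj, α.strongAt (α.cornerSet T a) a b

/-- Existence of a partial Galois coordinate system for the restriction of `α` to the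
subgroupoid `H` acting on `S_H ⊆ S` (for `H = ⊤`, `Sub = univ` this says that
`S^{α_𝒢} ⊆ S` is an `α_𝒢`-partial Galois extension). -/
def IsGaloisCoordSystem (H : Subgroupoid Obj) (Sub : Set S) : Prop :=
  ∃ (m : ℕ) (av bv : Fin m → S),
    (∀ i, av i ∈ Sub) ∧ (∀ i, bv i ∈ Sub) ∧
    (∀ ⦃a b : Obj⦄ (g : a ⟶ b), g ∈ H.arrows a b → a ≠ b →
        ∑ i, av i * α.act g (bv i) = 0) ∧
    (∀ (a : Obj) (g : a ⟶ a), g ∈ H.arrows a a → g ≠ 𝟙 a →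
        ∑ i, av i * α.act g (bv i) = 0) ∧
    (∀ a : Obj, a ∈ H.objs → ∑ i, av i * α.act (𝟙 a) (bv i) = α.e (𝟙 a))

/-- Group-type condition for the restriction of `α` to `H`, at the base object `u`:
there is a transversal (inside `H`) from `u` to every object of the `H`-component of `u`
whose ideals are as large as possible. -/
def IsGroupTypeAt (H : Subgroupoid Obj) (u : Obj) : Prop :=
  ∃ σ : ∀ v : Obj, (H.arrows u v).Nonempty → (u ⟶ v),
    (∀ v hv, σ v hv ∈ H.arrows u v) ∧
    (∀ h, σ u h = 𝟙 u) ∧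
    (∀ v hv, α.e (Groupoid.inv (σ v hv)) = α.e (𝟙 u) ∧ α.e (σ v hv) = α.e (𝟙 v))

/-- The restriction `α_H` of `α` to the subgroupoid `H` is of group-type. -/
def IsGroupType (H : Subgroupoid Obj) : Prop :=
  ∀ u ∈ H.objs, α.IsGroupTypeAt H u

end UPA

structure SubCorner (S : Type*) [CommRing S] where
  carrier : Set S
  unit : S
  unit_mem : unit ∈ carrier
  mul_unit : ∀ s ∈ carrier, s * unit = s
  add_mem : ∀ ⦃s t : S⦄, s ∈ carrier → t ∈ carrier → s + t ∈ carrier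
  mul_mem : ∀ ⦃s t : S⦄, s ∈ carrier → t ∈ carrier → s * t ∈ carrier
  neg_mem : ∀ ⦃s : S⦄, s ∈ carrier → -s ∈ carrier
  zero_mem : (0 : S) ∈ carrier

namespace SubCorner

variable {S : Type*} [CommRing S]

lemma nsmul_mem (P : SubCorner S) (n : ℕ) {s : S} (hs : s ∈ P.carrier) :
    n • s ∈ P.carrier := by
  induction n with
  | zero => simpa using P.zero_mem
  | succ n ih => rw [succ_nsmul]; exact P.add_mem ih hs

lemma zsmul_mem (P : SubCorner S) (n : ℤ) {s : S} (hs : s ∈ P.carrier) :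
    n • s ∈ P.carrier := by
  cases n with
  | ofNat n => simpa [natCast_zsmul] using P.nsmul_mem n hs
  | negSucc n => rw [negSucc_zsmul]; exact P.neg_mem (P.nsmul_mem (n+1) hs)

instance (P : SubCorner S) : CommRing ↥P.carrier where
  add a b := ⟨a.1 + b.1, P.add_mem a.2 b.2⟩
  mul a b := ⟨a.1 * b.1, P.mul_mem a.2 b.2⟩
  neg a := ⟨-a.1, P.neg_mem a.2⟩
  zero := ⟨0, P.zero_mem⟩
  one := ⟨P.unit, P.unit_mem⟩
  add_assoc a b c := Subtype.ext (add_assoc _ _ _)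
  zero_add a := Subtype.ext (zero_add _)
  add_zero a := Subtype.ext (add_zero _)
  add_comm a b := Subtype.ext (add_comm _ _)
  mul_assoc a b c := Subtype.ext (mul_assoc _ _ _)
  one_mul a := Subtype.ext (by
    show P.unit * a.1 = a.1
    rw [mul_comm]; exact P.mul_unit a.1 a.2)
  mul_one a := Subtype.ext (P.mul_unit a.1 a.2)
  left_distrib a b c := Subtype.ext (left_distrib _ _ _)
  right_distrib a b c := Subtype.ext (right_distrib _ _ _)
  mul_comm a b := Subtype.ext (mul_comm _ _)
  zero_mul a := Subtype.ext (zero_mul _)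
  mul_zero a := Subtype.ext (mul_zero _)
  neg_add_cancel a := Subtype.ext (neg_add_cancel _)
  nsmul n a := ⟨n • a.1, P.nsmul_mem n a.2⟩
  nsmul_zero a := Subtype.ext (zero_nsmul _)
  nsmul_succ n a := Subtype.ext (succ_nsmul _ _)
  zsmul n a := ⟨n • a.1, P.zsmul_mem n a.2⟩
  zsmul_zero' a := Subtype.ext (zero_zsmul _)
  zsmul_succ' n a := Subtype.ext (by
    show ((n.succ : ℤ)) • a.1 = (n : ℤ) • a.1 + a.1
    rw [Int.natCast_succ, add_zsmul, one_zsmul])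
  zsmul_neg' n a := Subtype.ext (by
    show (Int.negSucc n) • a.1 = -(((n.succ : ℤ)) • a.1)
    rw [negSucc_zsmul]
    norm_cast)

def incl {P Q : SubCorner S} (hle : P.carrier ⊆ Q.carrier) (hu : P.unit = Q.unit) :
    ↥P.carrier →+* ↥Q.carrier where
  toFun a := ⟨a.1, hle a.2⟩
  map_one' := Subtype.ext hu
  map_mul' _ _ := rfl
  map_zero' := rfl
  map_add' _ _ := rfl

def IsSepExt (P Q : SubCorner S) (hle : P.carrier ⊆ Q.carrier) (hu : P.unit = Q.unit) : Prop :=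
  letI : Algebra ↥P.carrier ↥Q.carrier := (incl hle hu).toAlgebra
  ∃ ε : TensorProduct ↥P.carrier ↥Q.carrier ↥Q.carrier,
    (∀ t : ↥Q.carrier,
        (TensorProduct.tmul ↥P.carrier t (1 : ↥Q.carrier)) * ε
          = ε * (TensorProduct.tmul ↥P.carrier (1 : ↥Q.carrier) t)) ∧
    LinearMap.mul' ↥P.carrier ↥Q.carrier ε = 1

end SubCorner

/-- A `Subring` of `S`, seen as a corner subring with identity `1`. -/
def Subring.toSC {S : Type*} [CommRing S] (T : Subring S) : SubCorner S where
  carrier := (T : Set S)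
  unit := 1
  unit_mem := T.one_mem
  mul_unit := fun s _ => mul_one s
  add_mem := fun _ _ hs ht => T.add_mem hs ht
  mul_mem := fun _ _ hs ht => T.mul_mem hs ht
  neg_mem := fun _ hs => T.neg_mem hs
  zero_mem := T.zero_mem

namespace UPA

variable {Obj : Type*} [Groupoid Obj] {S : Type*} [CommRing S] (α : UPA Obj S)

lemma invSet_one_mem (H : Subgroupoid Obj) : (1 : S) ∈ α.invSet H :=
  fun _ _ h _ => by rw [α.act_one h, one_mul]

lemma invSet_zero_mem (H : Subgroupoid Obj) : (0 : S) ∈ α.invSet H :=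
  fun _ _ h _ => by rw [α.act_zero h, zero_mul]

lemma invSet_add_mem (H : Subgroupoid Obj) {s t : S} (hs : s ∈ α.invSet H)
    (ht : t ∈ α.invSet H) : s + t ∈ α.invSet H :=
  fun _ _ h hH => by rw [α.act_add h, hs h hH, ht h hH, add_mul]

lemma invSet_mul_mem (H : Subgroupoid Obj) {s t : S} (hs : s ∈ α.invSet H)
    (ht : t ∈ α.invSet H) : s * t ∈ α.invSet H :=
  fun _ _ h hH => by
    rw [α.act_mul h, hs h hH, ht h hH, mul_mul_mul_comm, α.idem h]

lemma invSet_neg_mem (H : Subgroupoid Obj) {s : S} (hs : s ∈ α.invSet H) :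
    -s ∈ α.invSet H :=
  fun _ _ h hH => by rw [α.act_neg h, hs h hH, neg_mul]

/-- The subring of invariants `S^{α_H}` of `S`, a genuine unital subring of `S`. -/
def invariantsSubring (H : Subgroupoid Obj) : Subring S where
  carrier := α.invSet H
  one_mem' := α.invSet_one_mem H
  zero_mem' := α.invSet_zero_mem H
  add_mem' := α.invSet_add_mem H
  mul_mem' := α.invSet_mul_mem H
  neg_mem' := α.invSet_neg_mem H

/-- `S^{α_H}` as a corner subring of `S` (with identity `1`). -/
def invariantsSC (H : Subgroupoid Obj) : SubCorner S where
  carrier := α.invSet H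
  unit := 1
  unit_mem := α.invSet_one_mem H
  mul_unit := fun s _ => mul_one s
  add_mem := fun _ _ hs ht => α.invSet_add_mem H hs ht
  mul_mem := fun _ _ hs ht => α.invSet_mul_mem H hs ht
  neg_mem := fun _ hs => α.invSet_neg_mem H hs
  zero_mem := α.invSet_zero_mem H

lemma grpInvSet_unit_mem (y : Obj) (A : Set (y ⟶ y)) :
    α.e (𝟙 y) ∈ α.grpInvSet y A := by
  refine ⟨α.idem (𝟙 y), fun g _ => ?_⟩
  rw [α.act_e_src g]
  have : α.e (𝟙 y) * α.e g = α.e g := by rw [mul_comm]; exact α.e_le g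
  rw [this]

/-- `S_y^{α_A}` as a corner subring of `S` (with identity `1_y`). -/
def grpInvSC (y : Obj) (A : Set (y ⟶ y)) : SubCorner S where
  carrier := α.grpInvSet y A
  unit := α.e (𝟙 y)
  unit_mem := α.grpInvSet_unit_mem y A
  mul_unit := fun _ hs => hs.1
  add_mem := fun s t hs ht =>
    ⟨by rw [add_mul, hs.1, ht.1], fun g hg => by
      rw [α.act_add g, hs.2 g hg, ht.2 g hg, add_mul]⟩
  mul_mem := fun s t hs ht =>
    ⟨by rw [mul_assoc, ht.1], fun g hg => by
      rw [α.act_mul g, hs.2 g hg, ht.2 g hg, mul_mul_mul_comm, α.idem g]⟩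
  neg_mem := fun s hs =>
    ⟨by rw [neg_mul, hs.1], fun g hg => by rw [α.act_neg g, hs.2 g hg, neg_mul]⟩
  zero_mem := ⟨zero_mul _, fun g _ => by rw [α.act_zero g, zero_mul]⟩

lemma invSet_le (H : Subgroupoid Obj) :
    α.invSet (Subgroupoid.full (Set.univ : Set Obj)) ⊆ α.invSet H :=
  fun _ hs _ _ h _ => hs h ⟨trivial, trivial⟩

lemma invSet_le_subring {T : Subring S}
    (h : ∀ s ∈ α.invSet (Subgroupoid.full (Set.univ : Set Obj)), s ∈ T) :
    (α.invariantsSC (Subgroupoid.full (Set.univ : Set Obj))).carrier ⊆ (Subring.toSC T).carrier :=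
  h

lemma grpInvSet_le (y : Obj) (A : Set (y ⟶ y)) :
    α.grpInvSet y (Set.univ : Set (y ⟶ y)) ⊆ α.grpInvSet y A :=
  fun _ hs => ⟨hs.1, fun g _ => hs.2 g trivial⟩

end UPA

/-!
Let `Y` be a connected component of `ℋ` with base point `p` and group-type transversal `σ`.
Every `t' ∈ T_p` extends to an element of `T = S^{α_ℋ}`: transport it along `σ` to each
`z ∈ Y` and put `0` elsewhere. Testing an arrow `g : a ⟶ b` of `𝒢_T` on these extensions
shows two things. Extending `1_p` detects arrows leaving `Y`, so as `1_g ≠ 0` the arrows of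
`𝒢_T` stay inside components. For `a, b ∈ Y`, `g ∈ 𝒢_T` iff the loop `σ_a g σ_b⁻¹` lies in
`𝒢(p)_{T_p}`. Hence `𝒢_T` is closed under composition iff every `𝒢(p)_{T_p}` is;
identities and inverses are automatic.
-/

namespace UPA

variable {Obj : Type*} [Groupoid Obj] {S : Type*} [CommRing S] (α : UPA Obj S)

lemma e_id_mul ⦃a b : Obj⦄ (g : a ⟶ b) : α.e (𝟙 b) * α.e g = α.e g := by
  rw [mul_comm, α.e_le]

lemma mul_e_id_mul ⦃a b : Obj⦄ (g : a ⟶ b) (t : S) : t * α.e (𝟙 b) * α.e g = t * α.e g := by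
  rw [mul_assoc, α.e_id_mul]

lemma act_mul_e_id ⦃a b : Obj⦄ (g : a ⟶ b) (t : S) : α.act g (t * α.e (𝟙 a)) = α.act g t := by
  rw [← α.act_proj g t, ← α.act_proj g (t * α.e (𝟙 a)), α.mul_e_id_mul]

lemma act_e ⦃a b c : Obj⦄ (h : a ⟶ b) (g : b ⟶ c) :
    α.act g (α.e h) = α.e g * α.e (h ≫ g) := by
  have h_comp : α.act g (α.e h) = α.act (h ≫ g) (α.e (Groupoid.inv h)) * α.e g := by
    rw [← α.act_unit h, α.act_comp]
  have h_mem : α.act g (α.e h) * (α.e g * α.e (h ≫ g)) = α.act g (α.e h) := by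
    rw [h_comp, ← mul_assoc, mul_assoc (α.act _ _), α.idem, mul_right_comm, α.act_mem]
  -- `1_{hg}·1_g = α_g(α_h(1_{(hg)⁻¹}))` lies in `α_g(S_h)`, on which `α_g(1_h)` is the unit
  have h_unit : α.e (h ≫ g) * α.e g * α.act g (α.e h) = α.e (h ≫ g) * α.e g := by
    have h_top : α.e (h ≫ g) * α.e g = α.act g (α.act h (α.e (Groupoid.inv (h ≫ g)))) := by
      rw [α.act_comp, α.act_unit]
    rw [h_top, ← α.act_mul, α.act_mem]
  calc α.act g (α.e h) = α.act g (α.e h) * (α.e g * α.e (h ≫ g)) := h_mem.symm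
    _ = α.e (h ≫ g) * α.e g * α.act g (α.e h) := by ring
    _ = α.e g * α.e (h ≫ g) := by rw [h_unit, mul_comm]

lemma e_comp_of_full {p a b : Obj} (σ : p ⟶ a)
    (hσ_inv : α.e (Groupoid.inv σ) = α.e (𝟙 p)) (hσ : α.e σ = α.e (𝟙 a)) (g : a ⟶ b) :
    α.e (σ ≫ g) = α.e g := by
  have h₁ : α.e g * α.e (σ ≫ g) = α.e g := by
    rw [← α.act_e σ g, hσ, α.act_e_src]
  have h₂ : α.e (σ ≫ g) * α.e g = α.e (σ ≫ g) := by
    have h := α.act_e (Groupoid.inv σ) (σ ≫ g)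
    rwa [hσ_inv, α.act_e_src, ← Category.assoc, Groupoid.inv_comp, Category.id_comp,
      eq_comm] at h
  rw [← h₂, mul_comm, h₁]

lemma id_mem_fixingSet (T : Set S) (u : Obj) : 𝟙 u ∈ α.fixingSet T u u :=
  fun t _ => α.act_id u t

lemma inv_mem_fixingSet {T : Set S} ⦃a b : Obj⦄ {g : a ⟶ b}
    (hg : g ∈ α.fixingSet T a b) : Groupoid.inv g ∈ α.fixingSet T b a := by
  intro t ht
  have h := α.act_inv g t
  have h_unit : α.act (Groupoid.inv g) (α.e g) = α.e (Groupoid.inv g) := by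
    simpa using α.act_unit (Groupoid.inv g)
  rwa [hg t ht, α.act_mul, h_unit, α.act_mem] at h

lemma act_eq_of_corner {u z b : Obj} (σ : u ⟶ z) (g : z ⟶ b) {t t' : S}
    (h_corner : t * α.e (𝟙 z) = α.act σ t') :
    α.act g t = α.act (σ ≫ g) t' * α.e g := by
  rw [← α.act_mul_e_id g t, h_corner, α.act_comp]

lemma corner_mem_grpInvSet {H : Subgroupoid Obj} {t : S} (ht : t ∈ α.invSet H) (u : Obj) :
    t * α.e (𝟙 u) ∈ α.grpInvSet u (H.arrows u u) := by
  refine ⟨by rw [mul_assoc, α.idem], fun g hg => ?_⟩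
  rw [α.act_mul, ht g hg, α.act_e_src, mul_assoc, α.idem, α.mul_e_id_mul]

lemma act_conj_eq_iff {p u v : Obj} (σu : p ⟶ u) (σv : p ⟶ v)
    (hσu_inv : α.e (Groupoid.inv σu) = α.e (𝟙 p)) (hσu : α.e σu = α.e (𝟙 u))
    (hσv_inv : α.e (Groupoid.inv σv) = α.e (𝟙 p)) (hσv : α.e σv = α.e (𝟙 v))
    (h : u ⟶ v) {t' : S} (ht' : t' * α.e (𝟙 p) = t') :
    α.act (σu ≫ h ≫ Groupoid.inv σv) t' = t' * α.e (σu ≫ h ≫ Groupoid.inv σv) ↔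
      α.act (σu ≫ h) t' = α.act σv t' * α.e h := by
  have h_loop : (σu ≫ h ≫ Groupoid.inv σv) ≫ σv = σu ≫ h := by simp
  have h_e_loop : α.e (σu ≫ h ≫ Groupoid.inv σv) = α.e (h ≫ Groupoid.inv σv) :=
    α.e_comp_of_full σu hσu_inv hσu _
  have h_mem : α.act (σu ≫ h) t' * α.e h = α.act (σu ≫ h) t' := by
    rw [← α.e_comp_of_full σu hσu_inv hσu h, α.act_mem]
  have h_there : α.act σv (α.act (σu ≫ h ≫ Groupoid.inv σv) t') = α.act (σu ≫ h) t' := by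
    rw [α.act_comp, h_loop, hσv, ← α.act_mem (σu ≫ h), mul_assoc, α.e_le]
  have h_back : α.act (Groupoid.inv σv) (α.act (σu ≫ h) t') =
      α.act (σu ≫ h ≫ Groupoid.inv σv) t' := by
    rw [α.act_comp, Category.assoc, hσv_inv, ← α.act_mem (σu ≫ h ≫ _), mul_assoc,
      α.e_le]
  constructor
  · intro hfix
    have h_e : α.act σv (α.e (σu ≫ h ≫ Groupoid.inv σv)) * α.e h = α.e h := by
      rw [α.act_e, h_loop, hσv, α.e_comp_of_full σu hσu_inv hσu h, α.e_id_mul, α.idem]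
    rw [← h_mem, ← h_there, hfix, α.act_mul, mul_assoc, h_e]
  · intro heq
    rw [← h_back, heq, α.act_mul, α.act_inv, α.act_e, hσv_inv, h_e_loop, ← mul_assoc,
      mul_assoc t', α.idem, ht']

/-- `closed` says that `Y` is a union of connected components of `H`. -/
structure IsGroupTypeTransversal (H : Subgroupoid Obj) (Y : Set Obj) {p : Obj}
    (σ : ∀ z, z ∈ Y → (p ⟶ z)) : Prop where
  mem : ∀ z hz, σ z hz ∈ H.arrows p z
  e_inv : ∀ z hz, α.e (Groupoid.inv (σ z hz)) = α.e (𝟙 p)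
  e_eq : ∀ z hz, α.e (σ z hz) = α.e (𝟙 z)
  closed : ∀ ⦃u v⦄ (h : u ⟶ v), h ∈ H.arrows u v → u ∈ Y → v ∈ Y

section Transversal

variable {α} {H : Subgroupoid Obj} {Y : Set Obj} {p : Obj} {σ : ∀ z, z ∈ Y → (p ⟶ z)}

lemma IsGroupTypeTransversal.mem_iff (hσ : α.IsGroupTypeTransversal H Y σ) {u v : Obj}
    {h : u ⟶ v} (hh : h ∈ H.arrows u v) : u ∈ Y ↔ v ∈ Y :=
  ⟨hσ.closed h hh, hσ.closed _ (H.inv hh)⟩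

lemma IsGroupTypeTransversal.act_conj_eq_iff (hσ : α.IsGroupTypeTransversal H Y σ)
    {u v : Obj} (hu : u ∈ Y) (hv : v ∈ Y) (h : u ⟶ v) {t' : S}
    (ht' : t' * α.e (𝟙 p) = t') :
    α.act (σ u hu ≫ h ≫ Groupoid.inv (σ v hv)) t' =
        t' * α.e (σ u hu ≫ h ≫ Groupoid.inv (σ v hv)) ↔
      α.act (σ u hu ≫ h) t' = α.act (σ v hv) t' * α.e h :=
  α.act_conj_eq_iff _ _ (hσ.e_inv u hu) (hσ.e_eq u hu) (hσ.e_inv v hv) (hσ.e_eq v hv) h ht'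

variable [Fintype Obj]

variable (α Y σ) in
def extension [DecidablePred (· ∈ Y)] (t' : S) : S :=
  ∑ z, if hz : z ∈ Y then α.act (σ z hz) t' else 0

lemma extension_mul_e_id [DecidablePred (· ∈ Y)]
    (horth : ∀ u w : Obj, u ≠ w → α.e (𝟙 u) * α.e (𝟙 w) = 0)
    (hσ : α.IsGroupTypeTransversal H Y σ) (t' : S) (w : Obj) :
    α.extension Y σ t' * α.e (𝟙 w) = if hw : w ∈ Y then α.act (σ w hw) t' else 0 := by
  rw [extension, Finset.sum_mul, Fintype.sum_eq_single w fun z hzw => ?_]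
  · split_ifs with hw
    · rw [← α.act_mem, hσ.e_eq w hw, mul_assoc, α.idem]
    · rw [zero_mul]
  · split_ifs with hz
    · rw [← α.act_mem, hσ.e_eq z hz, mul_assoc, horth z w hzw, mul_zero]
    · rw [zero_mul]

lemma extension_mem_invSet [DecidablePred (· ∈ Y)]
    (horth : ∀ u w : Obj, u ≠ w → α.e (𝟙 u) * α.e (𝟙 w) = 0)
    (hσ : α.IsGroupTypeTransversal H Y σ) {t' : S}
    (ht' : t' ∈ α.grpInvSet p (H.arrows p p)) : α.extension Y σ t' ∈ α.invSet H := by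
  set t := α.extension Y σ t'
  have h_corner := extension_mul_e_id horth hσ t'
  intro u v h hh
  by_cases hu : u ∈ Y
  · have hv : v ∈ Y := (hσ.mem_iff hh).mp hu
    have h_loop : σ u hu ≫ h ≫ Groupoid.inv (σ v hv) ∈ H.arrows p p := by
      rw [← Category.assoc]
      exact H.mul (H.mul (hσ.mem u hu) hh) (H.inv (hσ.mem v hv))
    have h_u : t * α.e (𝟙 u) = α.act (σ u hu) t' := by rw [h_corner, dif_pos hu]
    have h_v : t * α.e (𝟙 v) = α.act (σ v hv) t' := by rw [h_corner, dif_pos hv]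
    rw [α.act_eq_of_corner _ h h_u, (hσ.act_conj_eq_iff hu hv h ht'.1).mp (ht'.2 _ h_loop),
      ← h_v, α.mul_e_id_mul, mul_assoc, α.idem]
  · have hv : v ∉ Y := fun hv => hu ((hσ.mem_iff hh).mpr hv)
    rw [← α.act_mul_e_id, h_corner, dif_neg hu, α.act_zero, ← α.mul_e_id_mul, h_corner,
      dif_neg hv, zero_mul]

lemma exists_invSet_extension (horth : ∀ u w : Obj, u ≠ w → α.e (𝟙 u) * α.e (𝟙 w) = 0)
    (hσ : α.IsGroupTypeTransversal H Y σ) {t' : S}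
    (ht' : t' ∈ α.grpInvSet p (H.arrows p p)) :
    ∃ t ∈ α.invSet H, (∀ z (hz : z ∈ Y), t * α.e (𝟙 z) = α.act (σ z hz) t') ∧
      ∀ w ∉ Y, t * α.e (𝟙 w) = 0 := by
  classical
  refine ⟨α.extension Y σ t', extension_mem_invSet horth hσ ht', fun z hz => ?_, fun w hw => ?_⟩
  · rw [extension_mul_e_id horth hσ, dif_pos hz]
  · rw [extension_mul_e_id horth hσ, dif_neg hw]

/-- `α_g` sends the extension of `1_p` to `1_g`, while the extension vanishes at `b ∉ Y`. -/
lemma e_eq_zero_of_mem_fixingSet (horth : ∀ u w : Obj, u ≠ w → α.e (𝟙 u) * α.e (𝟙 w) = 0)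
    (hσ : α.IsGroupTypeTransversal H Y σ) {a b : Obj} (ha : a ∈ Y) (hb : b ∉ Y)
    {g : a ⟶ b} (hg : g ∈ α.fixingSet (α.invSet H) a b) : α.e g = 0 := by
  obtain ⟨t, ht, h_in, h_out⟩ :=
    exists_invSet_extension horth hσ (α.grpInvSet_unit_mem p (H.arrows p p))
  calc α.e g = α.act g t := by
        rw [α.act_eq_of_corner _ g (h_in a ha), α.act_e_src,
          α.e_comp_of_full _ (hσ.e_inv a ha) (hσ.e_eq a ha), α.idem]
    _ = t * α.e (𝟙 b) * α.e g := by rw [hg t ht, α.mul_e_id_mul]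
    _ = 0 := by rw [h_out b hb, zero_mul]

lemma mem_fixingSet_invSet_iff (horth : ∀ u w : Obj, u ≠ w → α.e (𝟙 u) * α.e (𝟙 w) = 0)
    (hσ : α.IsGroupTypeTransversal H Y σ) {a b : Obj} (ha : a ∈ Y) (hb : b ∈ Y) (g : a ⟶ b) :
    g ∈ α.fixingSet (α.invSet H) a b ↔
      σ a ha ≫ g ≫ Groupoid.inv (σ b hb) ∈ α.fixingSet (α.grpInvSet p (H.arrows p p)) p p := by
  constructor
  · intro hg t' ht'
    obtain ⟨t, ht, h_in, -⟩ := exists_invSet_extension horth hσ ht'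
    have h_mem : α.act (σ a ha ≫ g) t' * α.e g = α.act (σ a ha ≫ g) t' := by
      rw [← α.e_comp_of_full _ (hσ.e_inv a ha) (hσ.e_eq a ha), α.act_mem]
    rw [hσ.act_conj_eq_iff ha hb g ht'.1, ← h_mem, ← α.act_eq_of_corner _ g (h_in a ha),
      hg t ht, ← α.mul_e_id_mul, h_in b hb]
  · intro hl t ht
    have h_corner : ∀ z (hz : z ∈ Y), t * α.e (𝟙 z) = α.act (σ z hz) (t * α.e (𝟙 p)) :=
      fun z hz => by rw [← hσ.e_inv z hz, α.act_proj, ht _ (hσ.mem z hz), hσ.e_eq z hz]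
    have ht' := α.corner_mem_grpInvSet ht p
    rw [α.act_eq_of_corner _ g (h_corner a ha),
      (hσ.act_conj_eq_iff ha hb g ht'.1).mp (hl _ ht'), mul_assoc, α.idem, ← h_corner b hb,
      α.mul_e_id_mul]

lemma mem_fixingSet_invSet_iff_of_loop
    (horth : ∀ u w : Obj, u ≠ w → α.e (𝟙 u) * α.e (𝟙 w) = 0)
    (hσ : α.IsGroupTypeTransversal H Y σ) (hp : p ∈ Y) (hσp : σ p hp = 𝟙 p) (g : p ⟶ p) :
    g ∈ α.fixingSet (α.invSet H) p p ↔ g ∈ α.fixingSet (α.grpInvSet p (H.arrows p p)) p p := by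
  simpa [hσp] using mem_fixingSet_invSet_iff horth hσ hp hp g

lemma comp_mem_fixingSet_invSet (horth : ∀ u w : Obj, u ≠ w → α.e (𝟙 u) * α.e (𝟙 w) = 0)
    (hσ : α.IsGroupTypeTransversal H Y σ)
    (h_loops : ∀ l ∈ α.fixingSet (α.grpInvSet p (H.arrows p p)) p p,
      ∀ l' ∈ α.fixingSet (α.grpInvSet p (H.arrows p p)) p p,
        l ≫ l' ∈ α.fixingSet (α.grpInvSet p (H.arrows p p)) p p)
    {a b c : Obj} (ha : a ∈ Y) (hb : b ∈ Y) (hc : c ∈ Y) {g : a ⟶ b} {h : b ⟶ c}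
    (hg : g ∈ α.fixingSet (α.invSet H) a b) (hh : h ∈ α.fixingSet (α.invSet H) b c) :
    g ≫ h ∈ α.fixingSet (α.invSet H) a c := by
  rw [mem_fixingSet_invSet_iff horth hσ ha hb] at hg
  rw [mem_fixingSet_invSet_iff horth hσ hb hc] at hh
  rw [mem_fixingSet_invSet_iff horth hσ ha hc]
  simpa using h_loops _ hg _ hh

end Transversal

end UPA

/-- **Proposition 4.3 (i).**  Standing hypotheses, with `1_g ≠ 0` for all `g`.  With
`ℋ ∈ wSub_gt(𝒢)`, its component data and `T = S^{α_ℋ}`, `T_{y_j} = S_{y_j}^{α_{ℋ_j(y_j)}}`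
as before: `𝒢_T` is a wide subgroupoid of `𝒢` if and only if `𝒢(y_j)_{T_{y_j}}` is a
subgroup of the isotropy group `𝒢(y_j)` for every `1 ≤ j ≤ r`. -/
theorem fixing_subgroupoid_iff_subgroups
    {Obj : Type*} [Groupoid Obj] [Fintype Obj] [∀ a b : Obj, Finite (a ⟶ b)]
    {S : Type*} [CommRing S] (α : UPA Obj S)
    (hsum : ∑ y : Obj, α.e (𝟙 y) = 1)
    (horth : ∀ y z : Obj, y ≠ z → α.e (𝟙 y) * α.e (𝟙 z) = 0)
    (hconn : ∀ a b : Obj, Nonempty (a ⟶ b))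
    (x : Obj) (τ : ∀ y : Obj, x ⟶ y) (hτx : τ x = 𝟙 x)
    (hgt : ∀ y : Obj, α.e (Groupoid.inv (τ y)) = α.e (𝟙 x) ∧ α.e (τ y) = α.e (𝟙 y))
    (hne : ∀ ⦃a b : Obj⦄ (g : a ⟶ b), α.e g ≠ 0)
    (H : Subgroupoid Obj) (hwide : H.IsWide)
    (r : ℕ) (Y : Fin r → Set Obj)
    (hYcover : ∀ u : Obj, ∃ j, u ∈ Y j)
    (hYconn : ∀ j, ∀ u ∈ Y j, ∀ v ∈ Y j, (H.arrows u v).Nonempty)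
    (hYdisj : ∀ j k, j ≠ k → ∀ u ∈ Y j, ∀ v ∈ Y k, H.arrows u v = ∅)
    (y : Fin r → Obj) (hy : ∀ j, y j ∈ Y j)
    (τj : ∀ (j : Fin r) (z : Obj), z ∈ Y j → ((y j) ⟶ z))
    (hτjH : ∀ j z hz, τj j z hz ∈ H.arrows (y j) z)
    (hτjid : ∀ j, τj j (y j) (hy j) = 𝟙 (y j))
    (hτjgt : ∀ j z hz, α.e (Groupoid.inv (τj j z hz)) = α.e (𝟙 (y j)) ∧
        α.e (τj j z hz) = α.e (𝟙 z)) :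
    ((∃ K : Subgroupoid Obj, K.IsWide ∧
        ∀ u v : Obj, K.arrows u v = α.fixingSet (α.invSet H) u v) ↔
      (∀ j : Fin r,
        𝟙 (y j) ∈ α.fixingSet (α.grpInvSet (y j) (H.arrows (y j) (y j))) (y j) (y j) ∧
        (∀ g ∈ α.fixingSet (α.grpInvSet (y j) (H.arrows (y j) (y j))) (y j) (y j),
          ∀ h ∈ α.fixingSet (α.grpInvSet (y j) (H.arrows (y j) (y j))) (y j) (y j),
            g ≫ h ∈ α.fixingSet (α.grpInvSet (y j) (H.arrows (y j) (y j))) (y j) (y j)) ∧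
        (∀ g ∈ α.fixingSet (α.grpInvSet (y j) (H.arrows (y j) (y j))) (y j) (y j),
          Groupoid.inv g ∈
            α.fixingSet (α.grpInvSet (y j) (H.arrows (y j) (y j))) (y j) (y j)))) := by
  have hσ : ∀ j, α.IsGroupTypeTransversal H (Y j) (τj j) := fun j =>
    { mem := hτjH j
      e_inv := fun z hz => (hτjgt j z hz).1
      e_eq := fun z hz => (hτjgt j z hz).2
      closed := fun u v h hh hu => by
        obtain ⟨k, hk⟩ := hYcover v
        obtain rfl | hjk := eq_or_ne j k
        · exact hk
        · rw [hYdisj j k hjk u hu v hk] at hh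
          exact hh.elim }
  constructor
  · rintro ⟨K, -, hK⟩ j
    have h_loop := α.mem_fixingSet_invSet_iff_of_loop horth (hσ j) (hy j) (hτjid j)
    refine ⟨α.id_mem_fixingSet _ _, fun g hg h hh => ?_, fun g hg => α.inv_mem_fixingSet hg⟩
    rw [← h_loop, ← hK] at hg hh ⊢
    exact K.mul hg hh
  · intro h_subgroup
    refine ⟨{ arrows := α.fixingSet (α.invSet H)
              inv := fun hg => α.inv_mem_fixingSet hg
              mul := fun {a b c g} hg {h} hh => ?_ },
      ⟨α.id_mem_fixingSet _⟩, fun _ _ => rfl⟩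
    obtain ⟨j, ha⟩ := hYcover a
    have h_target : ∀ {u v : Obj} {f : u ⟶ v}, u ∈ Y j →
        f ∈ α.fixingSet (α.invSet H) u v → v ∈ Y j := fun hu hf => by
      by_contra hv
      exact hne _ (UPA.e_eq_zero_of_mem_fixingSet horth (hσ j) hu hv hf)
    have hb := h_target ha hg
    exact UPA.comp_mem_fixingSet_invSet horth (hσ j) (h_subgroup j).2.1 ha hb
      (h_target hb hh) hg hh

end PaperGalois
end

section
/- Under the standing hypotheses, if S^{α_𝒢} ⊆ S is an α_𝒢-partial Galois extension, then for every y ∈ 𝒢₀ the extension S_y^{α_{𝒢(y)}} ⊆ S_y is an α_{𝒢(y)}-partial Galois extension, where α_{𝒢(y)} = (S_g, α_g)_{g∈𝒢(y)} is the restriction of α to the isotropy group 𝒢(y) acting partially on S_y. -/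
open CategoryTheory

namespace PaperGalois

namespace UPA

variable {Obj : Type*} [Groupoid Obj] {S : Type*} [CommRing S] (α : UPA Obj S)

lemma act_mul_e_id_src ⦃a b : Obj⦄ (g : a ⟶ b) (s : S) :
    α.act g (s * α.e (𝟙 a)) = α.act g s := by
  have hcut : s * α.e (𝟙 a) * α.e (Groupoid.inv g) = s * α.e (Groupoid.inv g) := by
    rw [mul_assoc, mul_comm (α.e (𝟙 a)), α.e_le]
  rw [← α.act_proj g, hcut, α.act_proj]

lemma mul_e_id_mul_e_id (s : S) (y : Obj) :
    s * α.e (𝟙 y) * α.e (𝟙 y) = s * α.e (𝟙 y) := by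
  rw [mul_assoc, α.idem]

lemma sum_mul_e_id_mul_act_mul_e_id {ι : Type*} (s : Finset ι) {y : Obj} (g : y ⟶ y)
    (a b : ι → S) :
    ∑ i ∈ s, a i * α.e (𝟙 y) * α.act g (b i * α.e (𝟙 y)) =
      (∑ i ∈ s, a i * α.act g (b i)) * α.e (𝟙 y) := by
  rw [Finset.sum_mul]
  refine Finset.sum_congr rfl fun i _ => ?_
  rw [α.act_mul_e_id_src, mul_right_comm]

end UPA

/-- **Lemma 5.1.**  Standing hypotheses.  If `S^{α_𝒢} ⊆ S` is an `α_𝒢`-partial Galois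
extension, then for every `y ∈ 𝒢₀`, `S_y^{α_{𝒢(y)}} ⊆ S_y` is an `α_{𝒢(y)}`-partial Galois
extension, where `𝒢(y)` is the isotropy group at `y` (realized as the full subgroupoid on
`{y}`) acting partially on the corner `S_y = S·1_y`. -/
theorem galois_restricts_to_isotropy
    {Obj : Type*} [Groupoid Obj] [Fintype Obj] [∀ a b : Obj, Finite (a ⟶ b)]
    {S : Type*} [CommRing S] (α : UPA Obj S)
    (hsum : ∑ y : Obj, α.e (𝟙 y) = 1)
    (horth : ∀ y z : Obj, y ≠ z → α.e (𝟙 y) * α.e (𝟙 z) = 0)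
    (hconn : ∀ a b : Obj, Nonempty (a ⟶ b))
    (x : Obj) (τ : ∀ y : Obj, x ⟶ y) (hτx : τ x = 𝟙 x)
    (hgt : ∀ y : Obj, α.e (Groupoid.inv (τ y)) = α.e (𝟙 x) ∧ α.e (τ y) = α.e (𝟙 y))
    (hGal : α.IsGaloisCoordSystem (Subgroupoid.full (Set.univ : Set Obj)) (Set.univ : Set S)) :
    ∀ y : Obj,
      α.IsGaloisCoordSystem (Subgroupoid.full ({y} : Set Obj))
        {s : S | s * α.e (𝟙 y) = s} := by
  intro y
  obtain ⟨m, a, b, -, -, -, hloop, hid⟩ := hGal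
  refine ⟨m, fun i => a i * α.e (𝟙 y), fun i => b i * α.e (𝟙 y),
    fun i => α.mul_e_id_mul_e_id (a i) y, fun i => α.mul_e_id_mul_e_id (b i) y, ?_, ?_, ?_⟩
  · rintro u v g ⟨hu, hv⟩ huv
    exact absurd (hu.trans hv.symm) huv
  · rintro u g ⟨rfl, -⟩ hg
    rw [α.sum_mul_e_id_mul_act_mul_e_id, hloop u g ⟨trivial, trivial⟩ hg, zero_mul]
  · rintro u hu
    obtain rfl : u = y := (Subgroupoid.mem_full_objs_iff {y}).mp hu
    have hu_univ : u ∈ (Subgroupoid.full (Set.univ : Set Obj)).objs :=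
      (Subgroupoid.mem_full_objs_iff Set.univ).mpr trivial
    rw [α.sum_mul_e_id_mul_act_mul_e_id, hid u hu_univ, α.idem]

end PaperGalois
end

section
/- Let 𝒢 be a finite, not necessarily connected, groupoid and α = (S_g, α_g)_{g∈𝒢} a unital global action of 𝒢 on a commutative ring S = ⊕_{y∈𝒢₀} S_y with S_g = S·1_g and 1_g ≠ 0 for all g ∈ 𝒢, and suppose S is an α_𝒢-partial Galois extension of S^{α_𝒢}. Let ℋ be a wide subgroupoid of 𝒢, let 𝒢 = 𝒢₁ ∪̇ … ∪̇ 𝒢_r be the decomposition of 𝒢 into connected components, set ℋ_j := ℋ ∩ 𝒢_j, and let ℋ_j = ℋ_{j,1} ∪̇ … ∪̇ ℋ_{j,n_j} be the decomposition of ℋ_j into connected components, where ℋ_{j,i} has object set Y_{j,i}; choose y_{j,i} ∈ Y_{j,i} for all i, j. Then S^{α_ℋ} is isomorphic as a ring to ⊕_{j=1}^r ⊕_{i=1}^{n_j} S_{y_{j,i}}^{α_{ℋ_{j,i}(y_{j,i})}}. -/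
open CategoryTheory

namespace PaperGalois

/-!
For a global action, `α_h` carries the corner `s·1_a` of an `ℋ`-invariant element `s` onto its
corner `s·1_b`, for every `h : a ⟶ b` in `ℋ`. So `s` is determined by its corners at one base
point `y` of each component of `ℋ`, and these corners are fixed by the isotropy groups `ℋ(y)`.
Conversely an `ℋ(y)`-invariant `c ∈ S_y` is transported to every object `u` of the component of
`y` along any arrow `y ⟶ u` of `ℋ`; this does not depend on the arrow, because two such arrows
differ by a loop at `y`. Hence `s ↦ s · ∑ 1_y` is the required isomorphism.
-/

/-- A choice of base points `base p` of the connected components of `H`, indexed by `ι`, with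
`comp u` the component of `u` and `path u` an arrow of `H` from its base point to `u`. -/
structure ComponentTransversal {Obj : Type*} [Groupoid Obj] (H : Subgroupoid Obj) (ι : Type*) where
  base : ι → Obj
  comp : Obj → ι
  path : ∀ u, base (comp u) ⟶ u
  path_mem : ∀ u, path u ∈ H.arrows (base (comp u)) u
  comp_base : ∀ p, comp (base p) = p
  comp_eq_of_mem : ∀ ⦃a b : Obj⦄ (h : a ⟶ b), h ∈ H.arrows a b → comp a = comp b

namespace ComponentTransversal

variable {Obj : Type*} [Groupoid Obj] {H : Subgroupoid Obj} {ι : Type*}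

lemma base_injective (T : ComponentTransversal H ι) : Function.Injective T.base :=
  Function.LeftInverse.injective T.comp_base

lemma id_mem (T : ComponentTransversal H ι) (u : Obj) : 𝟙 u ∈ H.arrows u u :=
  H.id_mem_of_tgt (T.path_mem u)

lemma eq_of_nonempty_arrows {Y : ι → Set Obj}
    (hYdisj : ∀ p q, p ≠ q → ∀ u ∈ Y p, ∀ v ∈ Y q, H.arrows u v = ∅)
    {p q : ι} {u v : Obj} (hu : u ∈ Y p) (hv : v ∈ Y q) (huv : (H.arrows u v).Nonempty) :
    p = q := by
  by_contra hpq
  rw [hYdisj p q hpq u hu v hv] at huv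
  exact Set.not_nonempty_empty huv

noncomputable def ofPartition (Y : ι → Set Obj)
    (hYconn : ∀ p, ∀ u ∈ Y p, ∀ v ∈ Y p, (H.arrows u v).Nonempty)
    (hYdisj : ∀ p q, p ≠ q → ∀ u ∈ Y p, ∀ v ∈ Y q, H.arrows u v = ∅)
    (hYcover : ∀ u, ∃ p, u ∈ Y p) (y : ι → Obj) (hy : ∀ p, y p ∈ Y p) :
    ComponentTransversal H ι where
  base := y
  comp u := (hYcover u).choose
  path u := (hYconn _ _ (hy _) u (hYcover u).choose_spec).some
  path_mem u := (hYconn _ _ (hy _) u (hYcover u).choose_spec).some_mem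
  comp_base p := eq_of_nonempty_arrows hYdisj (hYcover (y p)).choose_spec (hy p)
    (hYconn p _ (hy p) _ (hy p))
  comp_eq_of_mem _ _ h hh := eq_of_nonempty_arrows hYdisj (hYcover _).choose_spec
    (hYcover _).choose_spec ⟨h, hh⟩

end ComponentTransversal

namespace UPA

variable {Obj : Type*} [Groupoid Obj] {S : Type*} [CommRing S]

/-- Globality in the form `S_g = S_{t(g)}`; together with `act_comp` it gives
`α_g ∘ α_h = α_{gh}`. -/
def IsGlobal (α : UPA Obj S) : Prop :=
  ∀ ⦃a b : Obj⦄ (g : a ⟶ b), α.e g = α.e (𝟙 b)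

variable {α : UPA Obj S} {H : Subgroupoid Obj}

namespace IsGlobal

lemma act_mul_e_source (hα : α.IsGlobal) {a b : Obj} (g : a ⟶ b) (s : S) :
    α.act g (s * α.e (𝟙 a)) = α.act g s := by
  rw [← hα (Groupoid.inv g), α.act_proj]

lemma act_mul_e_target (hα : α.IsGlobal) {a b : Obj} (g : a ⟶ b) (s : S) :
    α.act g s * α.e (𝟙 b) = α.act g s := by
  rw [← hα g, α.act_mem]

lemma mul_e_target_eq_act (hα : α.IsGlobal) {s : S} (hs : s ∈ α.invSet H) {a b : Obj}
    {h : a ⟶ b} (hh : h ∈ H.arrows a b) : s * α.e (𝟙 b) = α.act h (s * α.e (𝟙 a)) := by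
  rw [hα.act_mul_e_source, hs h hh, hα h]

lemma mul_e_mem_grpInvSet (hα : α.IsGlobal) {s : S} (hs : s ∈ α.invSet H) (u : Obj) :
    s * α.e (𝟙 u) ∈ α.grpInvSet u (H.arrows u u) :=
  ⟨by rw [mul_assoc, α.idem], fun g hg => by
    rw [← hα.mul_e_target_eq_act hs hg, hα g, mul_assoc, α.idem]⟩

lemma act_eq_act_of_mem_grpInvSet (hα : α.IsGlobal) {u v : Obj} {c : S}
    (hc : c ∈ α.grpInvSet u (H.arrows u u)) {g g' : u ⟶ v}
    (hg : g ∈ H.arrows u v) (hg' : g' ∈ H.arrows u v) : α.act g c = α.act g' c := by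
  have hloop : α.act (g' ≫ Groupoid.inv g) c = c := by
    rw [hc.2 _ (H.mul hg' (H.inv hg)), hα, hc.1]
  calc α.act g c = α.act g (α.act (g' ≫ Groupoid.inv g) c) := by rw [hloop]
    _ = α.act g' c * α.e (𝟙 v) := by rw [α.act_comp, hα g]; simp
    _ = α.act g' c := hα.act_mul_e_target g' c

lemma eq_of_mul_e_eq [Fintype Obj] (hα : α.IsGlobal) (hsum : ∑ u : Obj, α.e (𝟙 u) = 1)
    {s t : S} (hs : s ∈ α.invSet H) (ht : t ∈ α.invSet H)
    (hagree : ∀ u, ∃ a, ∃ h ∈ H.arrows a u, s * α.e (𝟙 a) = t * α.e (𝟙 a)) : s = t := by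
  calc s = ∑ u, s * α.e (𝟙 u) := by rw [← Finset.mul_sum, hsum, mul_one]
    _ = ∑ u, t * α.e (𝟙 u) := Finset.sum_congr rfl fun u _ => by
      obtain ⟨a, h, hh, hst⟩ := hagree u
      rw [hα.mul_e_target_eq_act hs hh, hα.mul_e_target_eq_act ht hh, hst]
    _ = t := by rw [← Finset.mul_sum, hsum, mul_one]

end IsGlobal

variable {ι : Type*}

lemma IsGlobal.act_eq_act_path {T : ComponentTransversal H ι} {c : ι → S}
    (hα : α.IsGlobal)
    (hc : ∀ p, c p ∈ α.grpInvSet (T.base p) (H.arrows (T.base p) (T.base p)))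
    {p : ι} {v : Obj} {g : T.base p ⟶ v} (hg : g ∈ H.arrows (T.base p) v) :
    α.act g (c p) = α.act (T.path v) (c (T.comp v)) := by
  obtain rfl : T.comp v = p := (T.comp_eq_of_mem g hg).symm.trans (T.comp_base p)
  exact hα.act_eq_act_of_mem_grpInvSet (hc _) hg (T.path_mem v)

def extend [Fintype Obj] (α : UPA Obj S) (T : ComponentTransversal H ι) (c : ι → S) : S :=
  ∑ u, α.act (T.path u) (c (T.comp u))

section Extend

variable [Fintype Obj] {T : ComponentTransversal H ι} {c : ι → S}

lemma IsGlobal.extend_mul_e (hα : α.IsGlobal) (ho : OrthogonalIdempotents fun u : Obj => α.e (𝟙 u))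
    (u : Obj) : α.extend T c * α.e (𝟙 u) = α.act (T.path u) (c (T.comp u)) := by
  rw [extend, Finset.sum_mul, Finset.sum_eq_single u]
  · exact hα.act_mul_e_target _ _
  · intro v _ hvu
    rw [← hα.act_mul_e_target (T.path v), mul_assoc, ho.ortho hvu, mul_zero]
  · simp

lemma IsGlobal.extend_mul_e_base (hα : α.IsGlobal)
    (ho : OrthogonalIdempotents fun u : Obj => α.e (𝟙 u))
    (hc : ∀ p, c p ∈ α.grpInvSet (T.base p) (H.arrows (T.base p) (T.base p))) (p : ι) :
    α.extend T c * α.e (𝟙 (T.base p)) = c p := by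
  rw [hα.extend_mul_e ho, ← hα.act_eq_act_path hc (T.id_mem _), α.act_id, (hc p).1]

lemma IsGlobal.extend_mem_invSet (hα : α.IsGlobal)
    (ho : OrthogonalIdempotents fun u : Obj => α.e (𝟙 u))
    (hc : ∀ p, c p ∈ α.grpInvSet (T.base p) (H.arrows (T.base p) (T.base p))) :
    α.extend T c ∈ α.invSet H := by
  intro a b h hh
  calc α.act h (α.extend T c) = α.act h (α.act (T.path a) (c (T.comp a))) := by
        rw [← hα.extend_mul_e ho, hα.act_mul_e_source]
    _ = α.act (T.path a ≫ h) (c (T.comp a)) * α.e h := α.act_comp _ _ _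
    _ = α.extend T c * α.e h := by
        rw [hα.act_eq_act_path hc (H.mul (T.path_mem a) hh), hα h, hα.act_mul_e_target,
          hα.extend_mul_e ho]

end Extend

theorem IsGlobal.bijOn_mul_sum_e_base [Fintype Obj] [Fintype ι] (hα : α.IsGlobal)
    (hcomp : CompleteOrthogonalIdempotents fun u : Obj => α.e (𝟙 u))
    (T : ComponentTransversal H ι) :
    Set.BijOn (· * ∑ p, α.e (𝟙 (T.base p))) (α.invSet H)
      {t | ∃ c : ι → S, (∀ p, c p ∈ α.grpInvSet (T.base p) (H.arrows (T.base p) (T.base p))) ∧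
        t = ∑ p, c p} := by
  have ho := hcomp.toOrthogonalIdempotents
  have hbase (s : S) (p : ι) :
      s * (∑ q, α.e (𝟙 (T.base q))) * α.e (𝟙 (T.base p)) = s * α.e (𝟙 (T.base p)) := by
    have := (ho.embedding ⟨T.base, T.base_injective⟩).mul_sum_of_mem (Finset.mem_univ p)
    rw [mul_assoc, mul_comm _ (α.e _)]
    exact congrArg (s * ·) this
  refine ⟨fun s hs => ⟨_, fun p => hα.mul_e_mem_grpInvSet hs _, Finset.mul_sum _ _ _⟩,
    fun s hs t ht hst => ?_, ?_⟩
  · refine hα.eq_of_mul_e_eq hcomp.complete hs ht fun u => ⟨_, T.path u, T.path_mem u, ?_⟩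
    rw [← hbase s, ← hbase t]
    exact congrArg (· * _) hst
  · rintro _ ⟨c, hc, rfl⟩
    refine ⟨α.extend T c, hα.extend_mem_invSet ho hc, ?_⟩
    simp only [Finset.mul_sum, hα.extend_mul_e_base ho hc]

end UPA

/-- **Proposition 5.10 (global case, invariants via isotropy groups).**  Let `𝒢` be a
finite, not necessarily connected, groupoid and `α` a unital global action of `𝒢` on a
commutative ring `S = ⊕_{y∈𝒢₀} S_y` with `1_g ≠ 0` for all `g`, and suppose `S` is an
`α_𝒢`-partial Galois extension of `S^{α_𝒢}`.  Let `ℋ` be a wide subgroupoid of `𝒢`, let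
`𝒢 = 𝒢₁ ∪̇ … ∪̇ 𝒢_r` be the decomposition of `𝒢` into connected components (object sets
`Z_j`), `ℋ_j := ℋ ∩ 𝒢_j`, and let `ℋ_j = ℋ_{j,1} ∪̇ … ∪̇ ℋ_{j,n_j}` be the decomposition
of `ℋ_j` into connected components with object sets `Y_{j,i}` and chosen
`y_{j,i} ∈ Y_{j,i}`.  Then `S^{α_ℋ}` is isomorphic as a ring (via an additive and
multiplicative bijection) to `⊕_{j=1}^r ⊕_{i=1}^{n_j} S_{y_{j,i}}^{α_{ℋ_{j,i}(y_{j,i})}}`. -/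
theorem global_invariants_isotropy_decomposition
    {Obj : Type*} [Groupoid Obj] [Fintype Obj] [∀ a b : Obj, Finite (a ⟶ b)]
    {S : Type*} [CommRing S] (α : UPA Obj S)
    (hsum : ∑ y : Obj, α.e (𝟙 y) = 1)
    (horth : ∀ y z : Obj, y ≠ z → α.e (𝟙 y) * α.e (𝟙 z) = 0)
    (hglobal : ∀ ⦃a b : Obj⦄ (g : a ⟶ b), α.e g = α.e (𝟙 b))
    (hne : ∀ ⦃a b : Obj⦄ (g : a ⟶ b), α.e g ≠ 0)
    (hGal : α.IsGaloisCoordSystem (Subgroupoid.full (Set.univ : Set Obj)) (Set.univ : Set S))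
    (H : Subgroupoid Obj) (hwide : H.IsWide)
    (r : ℕ) (Z : Fin r → Set Obj)
    (hZconn : ∀ j, ∀ u ∈ Z j, ∀ v ∈ Z j, Nonempty (u ⟶ v))
    (hZdisj : ∀ j k, j ≠ k → ∀ u ∈ Z j, ∀ v ∈ Z k, IsEmpty (u ⟶ v))
    (hZcover : ∀ u : Obj, ∃ j, u ∈ Z j)
    (n : Fin r → ℕ) (Y : ∀ j : Fin r, Fin (n j) → Set Obj)
    (hYZ : ∀ j i, Y j i ⊆ Z j)
    (hYconn : ∀ j i, ∀ u ∈ Y j i, ∀ v ∈ Y j i, (H.arrows u v).Nonempty)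
    (hYdisj : ∀ (j j' : Fin r) (i : Fin (n j)) (i' : Fin (n j')),
        (⟨j, i⟩ : Σ j : Fin r, Fin (n j)) ≠ ⟨j', i'⟩ →
        ∀ u ∈ Y j i, ∀ v ∈ Y j' i', H.arrows u v = ∅)
    (hYcover : ∀ u : Obj, ∃ j i, u ∈ Y j i)
    (y : ∀ j : Fin r, Fin (n j) → Obj) (hy : ∀ j i, y j i ∈ Y j i) :
    ∃ f : S → S,
      Set.BijOn f (α.invSet H)
        {s : S | ∃ c : ∀ j : Fin r, Fin (n j) → S,
          (∀ j i, c j i ∈ α.grpInvSet (y j i) (H.arrows (y j i) (y j i))) ∧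
          s = ∑ j, ∑ i, c j i} ∧
      (∀ a b : S, a ∈ α.invSet H → b ∈ α.invSet H → f (a + b) = f a + f b) ∧
      (∀ a b : S, a ∈ α.invSet H → b ∈ α.invSet H → f (a * b) = f a * f b) := by
  let T : ComponentTransversal H (Σ j, Fin (n j)) :=
    .ofPartition (fun p => Y p.1 p.2) (fun p => hYconn p.1 p.2)
      (fun p q => hYdisj p.1 q.1 p.2 q.2)
      (fun u => let ⟨j, i, hu⟩ := hYcover u; ⟨⟨j, i⟩, hu⟩)
      (fun p => y p.1 p.2) (fun p => hy p.1 p.2)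
  have hcomp : CompleteOrthogonalIdempotents fun u : Obj => α.e (𝟙 u) :=
    ⟨⟨fun u => α.idem _, horth⟩, hsum⟩
  have hE : IsIdempotentElem (∑ p, α.e (𝟙 (T.base p))) :=
    (hcomp.toOrthogonalIdempotents.embedding ⟨T.base, T.base_injective⟩).isIdempotentElem_sum
  refine ⟨(· * ∑ p, α.e (𝟙 (T.base p))), ?_, fun a b _ _ => add_mul _ _ _,
    fun a b _ _ => by rw [mul_mul_mul_comm, hE.eq]⟩
  convert UPA.IsGlobal.bijOn_mul_sum_e_base hglobal hcomp T using 1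
  ext t
  constructor
  · rintro ⟨c, hc, rfl⟩
    exact ⟨fun p => c p.1 p.2, fun p => hc p.1 p.2, (Fintype.sum_sigma' c).symm⟩
  · rintro ⟨c, hc, rfl⟩
    exact ⟨fun j i => c ⟨j, i⟩, fun j i => hc ⟨j, i⟩, Fintype.sum_sigma c⟩

end PaperGalois
end
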